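/- The number f(n,m) of closed walks of length n and weight m in the transfer digraph G (equivalently the coefficient of x^m z^n in F(z,x) = (U−V−V′)/(1−U+V) with U=((p+1)/2)(1+x)z, V=pxz², where F = −z∂_z Q / Q and Q = 1−((p+1)/2)(1+x)z+pxz²) is given by f(n,m) = Σ_i (n/(n−i))·C(n−i,i)·C(n−2i, m−i)·(−p)^i·((p+1)/2)^{n−2i}, and satisfies f(n,m) = f(n,n−m). -/

import Mathlib

/-!
A closed walk in `G` is determined by its sequence of carries `γ` together with, at every step,
a digit `α` producing the next carry; for `p = 2b + 1` there are `b + 1` such digits when the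
carry is kept and `b` when it changes. Hence, after lumping the digits, `f(n, m)` is the
coefficient of `x^m` in `tr Mⁿ` for the `2 × 2` matrix `M = [[b+1, b x], [b, (b+1) x]]`, with
`tr M = (b+1)(1+x)` and `det M = p x`. By Cayley–Hamilton, `tr Mⁿ` is the Dickson polynomial
`Dₙ(tr M, det M) = Σ_i (n/(n-i)) C(n-i,i) (-det M)^i (tr M)^(n-2i)`, whose coefficients give the
formula; the symmetry `m ↦ n - m` is then `C(n-2i, m-i) = C(n-2i, n-m-i)`.
-/

/-- The arc relation of the transfer digraph `G` on `[p] × {0,1}`: there is an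
arc from `(α,γ)` to `(α′,γ′)` iff `α + (p−1)/2 + γ = β + pγ′` for some `β ∈ [p]`.
The weight of such an arc is the outgoing carry `γ′`. -/
def transferArc (p : ℕ) (v w : Fin p × Fin 2) : Prop :=
  ∃ β : Fin p, (v.1 : ℕ) + (p - 1) / 2 + (v.2 : ℕ) = (β : ℕ) + p * (w.2 : ℕ)

/-- `f(n,m)`: the number of closed walks of length `n` and weight `m` in the
transfer digraph `G` (a closed walk of length `n` is recorded by its sequence of
`n` vertices, indexed cyclically; its weight is the sum of the weights of its
arcs). -/
noncomputable def closedWalkCount (p n m : ℕ) [NeZero n] : ℕ :=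
  Nat.card {v : Fin n → Fin p × Fin 2 //
    (∀ i : Fin n, transferArc p (v i) (v (i + 1))) ∧
      (∑ i : Fin n, ((v (i + 1)).2 : ℕ)) = m}

open Finset Matrix Polynomial

namespace Fin

theorem snoc_eq_cons_add_one {n : ℕ} {α : Type*} (v : Fin n → α) (a : α) (t : Fin (n + 1)) :
    snoc (α := fun _ => α) v a t = cons (α := fun _ => α) a v (t + 1) := by
  induction t using lastCases with
  | last => simp
  | cast s => simp

end Fin

namespace Matrix

section Semiring

variable {R : Type*} [CommSemiring R] {κ ι : Type*} [Fintype κ] [DecidableEq κ]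

theorem pow_succ_apply_eq_sum (A : Matrix κ κ R) (k : ℕ) (i j : κ) :
    (A ^ (k + 1)) i j = ∑ v : Fin k → κ,
      ∏ t, A (Fin.cons (α := fun _ => κ) i v t) (Fin.snoc (α := fun _ => κ) v j t) := by
  induction k generalizing i with
  | zero => simp; rfl
  | succ k ih =>
    rw [pow_succ', mul_apply, ← (Fin.consEquiv fun _ => κ).sum_comp, Fintype.sum_prod_type]
    refine sum_congr rfl fun l _ => ?_
    simp only [ih, mul_sum, Fin.prod_univ_succ (n := k + 1), Fin.cons_zero, Fin.cons_succ]
    simp [Fin.consEquiv, ← Fin.cons_snoc_eq_snoc_cons]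

theorem trace_pow_eq_sum_prod (A : Matrix κ κ R) (n : ℕ) [NeZero n] :
    trace (A ^ n) = ∑ v : Fin n → κ, ∏ t, A (v t) (v (t + 1)) := by
  obtain ⟨k, rfl⟩ := Nat.exists_eq_succ_of_ne_zero (NeZero.ne n)
  rw [trace, ← (Fin.consEquiv fun _ => κ).sum_comp, Fintype.sum_prod_type]
  simp [pow_succ_apply_eq_sum, Fin.snoc_eq_cons_add_one, Fin.consEquiv]

theorem mul_pow_succ [Fintype ι] [DecidableEq ι] (A : Matrix κ ι R) (B : Matrix ι κ R) (k : ℕ) :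
    (A * B) ^ (k + 1) = A * (B * A) ^ k * B := by
  induction k with
  | zero => simp
  | succ k ih => rw [pow_succ, ih, pow_succ]; simp only [Matrix.mul_assoc]

theorem trace_mul_pow_comm [Fintype ι] [DecidableEq ι] (A : Matrix κ ι R) (B : Matrix ι κ R)
    {n : ℕ} (hn : n ≠ 0) : trace ((A * B) ^ n) = trace ((B * A) ^ n) := by
  obtain ⟨k, rfl⟩ := Nat.exists_eq_succ_of_ne_zero hn
  rw [mul_pow_succ, Matrix.mul_assoc, trace_mul_comm, Matrix.mul_assoc, ← pow_succ]

end Semiring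

section Ring

variable {R : Type*} [CommRing R]

theorem sq_eq_trace_smul_sub_det_smul (M : Matrix (Fin 2) (Fin 2) R) :
    M ^ 2 = trace M • M - det M • (1 : Matrix (Fin 2) (Fin 2) R) := by
  ext i j
  fin_cases i <;> fin_cases j <;>
    simp [sq, mul_apply, trace_fin_two, det_fin_two] <;> ring

theorem trace_pow_eq_eval_dickson (M : Matrix (Fin 2) (Fin 2) R) (n : ℕ) :
    trace (M ^ n) = (dickson 1 (det M) n).eval (trace M) := by
  induction n using Nat.twoStepInduction with
  | zero => norm_num
  | one => simp
  | more n ih₀ ih₁ =>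
    rw [pow_add, sq_eq_trace_smul_sub_det_smul, mul_sub, mul_smul_comm, mul_smul_comm, ← pow_succ,
      mul_one, trace_sub, trace_smul, trace_smul, ih₀, ih₁, dickson_add_two]
    simp

end Ring

end Matrix

section Dickson

noncomputable def dicksonCoeff (n i : ℕ) : ℚ := (n : ℚ) / ((n : ℚ) - i) * ((n - i).choose i : ℚ)

theorem dicksonCoeff_zero_right {n : ℕ} (hn : n ≠ 0) : dicksonCoeff n 0 = 1 := by
  simp [dicksonCoeff, hn]

theorem dicksonCoeff_of_lt {n i : ℕ} (h : n - i < i) : dicksonCoeff n i = 0 := by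
  simp [dicksonCoeff, Nat.choose_eq_zero_of_lt h]

theorem dicksonCoeff_add_two_succ (i k : ℕ) :
    dicksonCoeff (i + k + 2) (i + 1) = (k + 1).choose (i + 1) + k.choose i := by
  have hsub : ((i + k + 2 : ℕ) : ℚ) - (i + 1 : ℕ) = k + 1 := by push_cast; ring
  have hchoose : ((k + 1) * k.choose i : ℚ) = (k + 1).choose (i + 1) * (i + 1) := by
    exact_mod_cast Nat.add_one_mul_choose_eq k i
  rw [dicksonCoeff, hsub, show i + k + 2 - (i + 1) = k + 1 by omega]
  field_simp
  push_cast
  linear_combination -hchoose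

theorem dicksonCoeff_add_two {n : ℕ} (hn : n ≠ 0) (i : ℕ) :
    dicksonCoeff (n + 2) (i + 1) = dicksonCoeff (n + 1) (i + 1) + dicksonCoeff n i := by
  rcases i with _ | i
  · obtain ⟨k, rfl⟩ := Nat.exists_eq_succ_of_ne_zero hn
    rw [dicksonCoeff_zero_right hn, show k + 1 + 2 = 0 + (k + 1) + 2 by omega,
      show k + 1 + 1 = 0 + k + 2 by omega, dicksonCoeff_add_two_succ, dicksonCoeff_add_two_succ]
    simp
  rcases lt_or_ge n (i + 2) with h | h
  · rw [dicksonCoeff_of_lt (by omega), dicksonCoeff_of_lt (by omega),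
      dicksonCoeff_of_lt (by omega), add_zero]
  obtain ⟨k, rfl⟩ := Nat.exists_eq_add_of_le h
  have pascal₁ := Nat.choose_succ_succ' (k + 1) (i + 1)
  have pascal₂ := Nat.choose_succ_succ' k i
  rw [show i + 2 + k + 2 = (i + 1) + (k + 1) + 2 by omega,
    show i + 2 + k + 1 = (i + 1) + k + 2 by omega, show i + 2 + k = i + k + 2 by omega,
    dicksonCoeff_add_two_succ, dicksonCoeff_add_two_succ, dicksonCoeff_add_two_succ]
  push_cast [pascal₁, pascal₂]
  ring

variable {R : Type*} [CommRing R] [Algebra ℚ R]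

/-- Terms with `2 * i > n` vanish, so any range beyond `n / 2` may be used; this lets the three
sums of the recursion `dickson_add_two` share one range. -/
theorem dickson_one_eq_sum (a : R) {n N : ℕ} (hn : n ≠ 0) (hN : n ≤ 2 * N) :
    dickson 1 a n = ∑ i ∈ range (N + 1), dicksonCoeff n i • (C (-a) ^ i * X ^ (n - 2 * i)) := by
  induction n using Nat.strong_induction_on generalizing N with
  | _ n ih =>
  match n, N with
  | 1, N =>
    rw [sum_range_succ', sum_eq_zero fun i _ => by rw [dicksonCoeff_of_lt (by omega), zero_smul]]
    simp [dicksonCoeff_zero_right]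
  | 2, N + 1 =>
    rw [sum_range_succ', sum_range_succ',
      sum_eq_zero fun i _ => by rw [dicksonCoeff_of_lt (by omega), zero_smul]]
    norm_num [dicksonCoeff_zero_right, dickson_two, dicksonCoeff, two_smul]
    ring
  | n + 3, N + 1 =>
    have hstep (i : ℕ) :
        X * dicksonCoeff (n + 2) (i + 1) • (C (-a) ^ (i + 1) * X ^ (n + 2 - 2 * (i + 1))) -
          C a * dicksonCoeff (n + 1) i • (C (-a) ^ i * X ^ (n + 1 - 2 * i)) =
        dicksonCoeff (n + 3) (i + 1) • (C (-a) ^ (i + 1) * X ^ (n + 3 - 2 * (i + 1))) := by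
      have hX : dicksonCoeff (n + 2) (i + 1) • (X * X ^ (n + 2 - 2 * (i + 1)) : R[X]) =
          dicksonCoeff (n + 2) (i + 1) • X ^ (n + 1 - 2 * i) := by
        rcases lt_or_ge (n + 2) (2 * (i + 1)) with h | h
        · rw [dicksonCoeff_of_lt (by omega), zero_smul, zero_smul]
        · rw [← pow_succ']; congr 2; omega
      rw [dicksonCoeff_add_two (n := n + 1) (by omega), show n + 3 - 2 * (i + 1) = n + 1 - 2 * i by omega]
      simp only [Algebra.smul_def, map_add, map_neg] at hX ⊢
      linear_combination (-C a) ^ (i + 1) * hX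
    rw [dickson_add_two, ih (n + 2) (by omega) (by omega) (N := N + 1) (by omega),
      ih (n + 1) (by omega) (by omega) (N := N) (by omega), mul_sum, mul_sum, sum_range_succ',
      sum_range_succ' _ (N + 1), add_sub_right_comm, ← sum_sub_distrib]
    congr 1
    · exact sum_congr rfl fun i _ => hstep i
    · simp [dicksonCoeff_zero_right, pow_succ']

end Dickson

def carry (p : ℕ) (v : Fin p × Fin 2) : Fin 2 :=
  if (v.1 : ℕ) + (p - 1) / 2 + v.2 < p then 0 else 1

theorem transferArc_iff {p : ℕ} (v w : Fin p × Fin 2) :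
    transferArc p v w ↔ w.2 = carry p v := by
  have hα := v.1.isLt
  have hγ := v.2.isLt
  obtain ⟨-, g⟩ := w
  unfold transferArc carry
  constructor
  · rintro ⟨β, hβ⟩
    have := β.isLt
    fin_cases g <;> simp at hβ ⊢ <;> omega
  · intro h
    subst h
    split_ifs with hs
    · exact ⟨⟨_, hs⟩, by simp⟩
    · exact ⟨⟨(v.1 : ℕ) + (p - 1) / 2 + v.2 - p, by omega⟩, by simp; omega⟩

theorem card_carry_eq (b : ℕ) (g g' : Fin 2) :
    #{α : Fin (2 * b + 1) | carry (2 * b + 1) (α, g) = g'} = if g = g' then b + 1 else b := by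
  have hg := g.isLt
  have hcarry (α : Fin (2 * b + 1)) : carry (2 * b + 1) (α, g) = 0 ↔ (α : ℕ) < b + 1 - g := by
    simp only [carry, show (2 * b + 1 - 1) / 2 = b by omega]
    split_ifs <;> simp <;> omega
  have hsplit := card_filter_add_card_filter_not (s := univ) fun α : Fin (2 * b + 1) =>
    carry (2 * b + 1) (α, g) = 0
  rw [card_univ, Fintype.card_fin, filter_congr fun α _ => hcarry α,
    Fin.card_filter_val_lt] at hsplit
  obtain rfl | rfl : g' = 0 ∨ g' = 1 := by omega
  · rw [filter_congr fun α _ => hcarry α, Fin.card_filter_val_lt]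
    split_ifs <;> omega
  · rw [filter_congr fun α _ => show carry _ (α, g) = 1 ↔ ¬carry _ (α, g) = 0 by omega]
    split_ifs <;> omega

noncomputable def transferMatrix (p : ℕ) : Matrix (Fin p × Fin 2) (Fin p × Fin 2) ℚ[X] :=
  of fun v w => if w.2 = carry p v then X ^ (w.2 : ℕ) else 0

noncomputable def reducedTransferMatrix (b : ℕ) : Matrix (Fin 2) (Fin 2) ℚ[X] :=
  of fun g g' => ((if g = g' then b + 1 else b : ℕ) : ℚ[X]) * X ^ (g' : ℕ)

theorem closedWalkCount_eq_coeff_trace (p n m : ℕ) [NeZero n] :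
    (closedWalkCount p n m : ℚ) = (trace (transferMatrix p ^ n)).coeff m := by
  classical
  simp only [closedWalkCount, Nat.card_eq_fintype_card, Fintype.card_subtype, card_filter,
    Nat.cast_sum, trace_pow_eq_sum_prod, transferMatrix, of_apply, prod_ite_zero,
    finsetSum_coeff, transferArc_iff]
  refine sum_congr rfl fun v _ => ?_
  by_cases harc : ∀ i, (v (i + 1)).2 = carry p (v i)
  · simp only [harc, true_and, mem_univ, implies_true, if_true, prod_pow_eq_pow_sum, coeff_X_pow]
    split_ifs <;> simp_all [eq_comm]
  · simp [harc]

theorem trace_transferMatrix_pow (b : ℕ) {n : ℕ} (hn : n ≠ 0) :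
    trace (transferMatrix (2 * b + 1) ^ n) = trace (reducedTransferMatrix b ^ n) := by
  -- The transfer matrix factors through the carry of the target vertex, and in the reversed
  -- product `W * U` the digits are summed out.
  let U : Matrix (Fin (2 * b + 1) × Fin 2) (Fin 2) ℚ[X] :=
    of fun v g => if g = carry (2 * b + 1) v then X ^ (g : ℕ) else 0
  let W : Matrix (Fin 2) (Fin (2 * b + 1) × Fin 2) ℚ[X] := of fun g w => if w.2 = g then 1 else 0
  have hUW : transferMatrix (2 * b + 1) = U * W := by
    ext v w
    simp [U, W, transferMatrix, mul_apply]
  have hWU : W * U = reducedTransferMatrix b := by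
    refine Matrix.ext fun g g' => ?_
    simp only [U, W, reducedTransferMatrix, mul_apply, Fintype.sum_prod_type, of_apply, ite_mul,
      one_mul, zero_mul, sum_ite_eq', mem_univ, if_true]
    rw [← sum_filter, sum_const, nsmul_eq_mul, filter_congr fun α _ => eq_comm, card_carry_eq]
  rw [hUW, trace_mul_pow_comm _ _ hn, hWU]

theorem coeff_trace_reducedTransferMatrix_pow (b : ℕ) {n m : ℕ} (hn : n ≠ 0) (hm : m ≤ n) :
    (trace (reducedTransferMatrix b ^ n)).coeff m =
      ∑ i ∈ range (min m (n - m) + 1), dicksonCoeff n i * (-(2 * b + 1 : ℚ)) ^ i *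
        (b + 1 : ℚ) ^ (n - 2 * i) * (n - 2 * i).choose (m - i) := by
  have htrace : trace (reducedTransferMatrix b) = C ((b : ℚ) + 1) * (1 + X) := by
    simp [trace_fin_two, reducedTransferMatrix]
    ring
  have hdet : det (reducedTransferMatrix b) = C (2 * (b : ℚ) + 1) * X := by
    simp [det_fin_two, reducedTransferMatrix, C_ofNat]
    ring
  have hterm (i : ℕ) : (dicksonCoeff n i • ((-(C (2 * (b : ℚ) + 1) * X)) ^ i *
      (C ((b : ℚ) + 1) * (1 + X)) ^ (n - 2 * i))).coeff m = dicksonCoeff n i *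
        (-(2 * b + 1 : ℚ)) ^ i * (b + 1 : ℚ) ^ (n - 2 * i) *
          if i ≤ m then ((n - 2 * i).choose (m - i) : ℚ) else 0 := by
    rw [smul_eq_C_mul, ← neg_mul, ← C_neg, mul_pow, mul_pow, ← C_pow, ← C_pow,
      mul_mul_mul_comm, ← mul_assoc, ← C_mul, ← C_mul, coeff_C_mul, coeff_X_pow_mul',
      coeff_one_add_X_pow]
    ring
  rw [trace_pow_eq_eval_dickson, htrace, hdet, dickson_one_eq_sum _ hn (N := n) (by omega),
    eval_finsetSum, finsetSum_coeff]
  simp only [eval_smul, eval_mul, eval_pow, eval_C, eval_X, hterm]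
  symm
  rw [← sum_subset (range_subset_range.mpr (by omega : min m (n - m) + 1 ≤ n + 1))]
  · refine sum_congr rfl fun i hi => ?_
    rw [if_pos (by rw [mem_range] at hi; omega)]
  · intro i _ hi
    rw [mem_range] at hi
    split_ifs with him
    · rcases lt_or_ge (n - i) i with h | h
      · simp [dicksonCoeff_of_lt h]
      · simp [Nat.choose_eq_zero_of_lt (by omega : n - 2 * i < m - i)]
    · simp

theorem closedWalkCount_eq_sum (b n m : ℕ) [NeZero n] (hm : m ≤ n) :
    (closedWalkCount (2 * b + 1) n m : ℚ) =
      ∑ i ∈ range (min m (n - m) + 1), dicksonCoeff n i * (-(2 * b + 1 : ℚ)) ^ i *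
        (b + 1 : ℚ) ^ (n - 2 * i) * (n - 2 * i).choose (m - i) := by
  rw [closedWalkCount_eq_coeff_trace, trace_transferMatrix_pow b (NeZero.ne n),
    coeff_trace_reducedTransferMatrix_pow b (NeZero.ne n) hm]

theorem closedWalkCount_symm (b n m : ℕ) [NeZero n] (hm : m ≤ n) :
    closedWalkCount (2 * b + 1) n (n - m) = closedWalkCount (2 * b + 1) n m := by
  have hsymm : (closedWalkCount (2 * b + 1) n (n - m) : ℚ) = closedWalkCount (2 * b + 1) n m := by
    rw [closedWalkCount_eq_sum b n m hm, closedWalkCount_eq_sum b n (n - m) (by omega),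
      Nat.sub_sub_self hm, min_comm]
    refine sum_congr rfl fun i hi => ?_
    rw [mem_range] at hi
    rw [Nat.choose_symm_of_eq_add (by omega : n - 2 * i = (m - i) + (n - m - i))]
  exact_mod_cast hsymm

theorem closed_walk_count_formula_general
    (p : ℕ) (hodd : Odd p) (n m : ℕ) [NeZero n] (hm : m ≤ n) :
    ((closedWalkCount p n m : ℚ) =
        ∑ i ∈ Finset.range (min m (n - m) + 1),
          (n : ℚ) / ((n : ℚ) - (i : ℚ)) * ((n - i).choose i : ℚ) *
            ((n - 2 * i).choose (m - i) : ℚ) * (-(p : ℚ)) ^ i *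
            ((((p + 1) / 2 : ℕ) : ℚ)) ^ (n - 2 * i)) ∧
      closedWalkCount p n m = closedWalkCount p n (n - m) := by
  obtain ⟨b, rfl⟩ := hodd
  refine ⟨?_, (closedWalkCount_symm b n m hm).symm⟩
  rw [closedWalkCount_eq_sum b n m hm]
  refine sum_congr rfl fun i _ => ?_
  rw [dicksonCoeff, show (2 * b + 1 + 1) / 2 = b + 1 by omega]
  push_cast
  ring

/-- `f(n,m) = Σ_i (n/(n−i))·C(n−i,i)·C(n−2i,m−i)·(−p)^i·((p+1)/2)^{n−2i}`, and
`f(n,m) = f(n,n−m)`. -/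
theorem closed_walk_count_formula
    (p : ℕ) (hp : p.Prime) (hodd : Odd p) (n m : ℕ) [NeZero n] (hm : m ≤ n) :
    ((closedWalkCount p n m : ℚ) =
        ∑ i ∈ Finset.range (min m (n - m) + 1),
          (n : ℚ) / ((n : ℚ) - (i : ℚ)) * ((n - i).choose i : ℚ) *
            ((n - 2 * i).choose (m - i) : ℚ) * (-(p : ℚ)) ^ i *
            ((((p + 1) / 2 : ℕ) : ℚ)) ^ (n - 2 * i)) ∧
      closedWalkCount p n m = closedWalkCount p n (n - m) :=
  closed_walk_count_formula_general p hodd n m hm
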